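/- Fix n and suppose 1 − (D_n^{(2)}/N) Q_n ≠ 0. Then H_{∖n} = H − (D_n^{(2)}/N) x_n x_nᵀ is invertible, x_nᵀ H_{∖n}⁻¹ x_n = Q_n / (1 − (D_n^{(2)}/N) Q_n), and consequently the Newton-step prediction satisfies x_nᵀ θ̂_{NS,∖n} = x_nᵀ θ̂ + (D_n^{(1)}/N) · Q_n / (1 − (D_n^{(2)}/N) Q_n). -/

import Mathlib

/-!
Convexity makes every `D2 m` nonnegative, so `H` is a positive semidefinite Gram-type sum plus
`lam • 1` and hence invertible. `Hn n` is a rank-one update of `H`, and the Sherman–Morrison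
formula `(A + u vᵀ)⁻¹ = A⁻¹ - A⁻¹ u vᵀ A⁻¹ / (1 + vᵀ A⁻¹ u)` shows it is invertible when
`1 - (D2 n / N) Q n ≠ 0`; sandwiching that inverse between `x n` gives
`Q + c Q² / (1 - c Q) = Q / (1 - c Q)` with `c = D2 n / N`.
-/

open Matrix

theorem ConvexOn.iteratedDeriv_two_nonneg {g : ℝ → ℝ} (hg : ConvexOn ℝ Set.univ g)
    (hd : Differentiable ℝ g) (a : ℝ) : 0 ≤ iteratedDeriv 2 g a := by
  rw [iteratedDeriv_succ, iteratedDeriv_one]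
  exact (monotoneOn_univ.mp (hg.monotoneOn_deriv fun z _ => hd z)).deriv_nonneg

namespace Matrix

theorem posSemidef_sum_smul_vecMulVec_self {ι n : Type*} [Fintype ι] [Fintype n]
    (d : ι → ℝ) (hd : ∀ i, 0 ≤ d i) (x : ι → n → ℝ) :
    (∑ i, d i • vecMulVec (x i) (x i)).PosSemidef :=
  posSemidef_sum _ fun i _ => (posSemidef_vecMulVec_self_star (x i)).smul (hd i)

theorem sub_smul_vecMulVec_self {n R : Type*} [CommRing R] (A : Matrix n n R) (c : R)
    (u : n → R) : A - c • vecMulVec u u = A + vecMulVec ((-c) • u) u := by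
  rw [smul_vecMulVec, neg_smul, sub_eq_add_neg]

section ShermanMorrison

variable {n R : Type*} [Fintype n] [DecidableEq n] [Field R] {A : Matrix n n R}

theorem add_vecMulVec_mul_eq_one (hA : IsUnit A) (u v : n → R)
    (h : 1 + v ⬝ᵥ (A⁻¹ *ᵥ u) ≠ 0) :
    (A + vecMulVec u v) *
        (A⁻¹ - (1 + v ⬝ᵥ (A⁻¹ *ᵥ u))⁻¹ • vecMulVec (A⁻¹ *ᵥ u) (v ᵥ* A⁻¹)) = 1 := by
  have hAA : A * A⁻¹ = 1 := mul_nonsing_inv A ((isUnit_iff_isUnit_det A).mp hA)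
  have hcol : (A + vecMulVec u v) * vecMulVec (A⁻¹ *ᵥ u) (v ᵥ* A⁻¹)
      = (1 + v ⬝ᵥ (A⁻¹ *ᵥ u)) • vecMulVec u (v ᵥ* A⁻¹) := by
    rw [add_mul, mul_vecMulVec, mulVec_mulVec, hAA, one_mulVec, vecMulVec_mul_vecMulVec,
      vecMulVec_smul, add_smul, one_smul]
  rw [mul_sub, Matrix.mul_smul, hcol, smul_smul, inv_mul_cancel₀ h, one_smul, add_mul, hAA,
    vecMulVec_mul, add_sub_cancel_right]

theorem isUnit_add_vecMulVec (hA : IsUnit A) (u v : n → R) (h : 1 + v ⬝ᵥ (A⁻¹ *ᵥ u) ≠ 0) :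
    IsUnit (A + vecMulVec u v) :=
  (isUnit_iff_isUnit_det _).mpr (isUnit_det_of_right_inverse (add_vecMulVec_mul_eq_one hA u v h))

theorem inv_add_vecMulVec (hA : IsUnit A) (u v : n → R) (h : 1 + v ⬝ᵥ (A⁻¹ *ᵥ u) ≠ 0) :
    (A + vecMulVec u v)⁻¹ =
      A⁻¹ - (1 + v ⬝ᵥ (A⁻¹ *ᵥ u))⁻¹ • vecMulVec (A⁻¹ *ᵥ u) (v ᵥ* A⁻¹) :=
  inv_eq_right_inv (add_vecMulVec_mul_eq_one hA u v h)

theorem dotProduct_inv_add_vecMulVec_mulVec (hA : IsUnit A) (u v w z : n → R)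
    (h : 1 + v ⬝ᵥ (A⁻¹ *ᵥ u) ≠ 0) :
    w ⬝ᵥ ((A + vecMulVec u v)⁻¹ *ᵥ z) = w ⬝ᵥ (A⁻¹ *ᵥ z) -
      (w ⬝ᵥ (A⁻¹ *ᵥ u)) * (v ⬝ᵥ (A⁻¹ *ᵥ z)) / (1 + v ⬝ᵥ (A⁻¹ *ᵥ u)) := by
  rw [inv_add_vecMulVec hA u v h, sub_mulVec, smul_mulVec, vecMulVec_mulVec, dotProduct_sub,
    dotProduct_smul, dotProduct_smul, ← dotProduct_mulVec, smul_eq_mul]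
  simp only [MulOpposite.smul_eq_mul_unop, MulOpposite.unop_op]
  rw [inv_mul_eq_div]

theorem dotProduct_inv_mulVec_neg_smul (c : R) (u v : n → R) :
    v ⬝ᵥ (A⁻¹ *ᵥ ((-c) • u)) = -(c * (v ⬝ᵥ (A⁻¹ *ᵥ u))) := by
  rw [mulVec_smul, dotProduct_smul, smul_eq_mul, neg_mul]

theorem isUnit_sub_smul_vecMulVec_self (hA : IsUnit A) (c : R) (u : n → R)
    (h : 1 - c * (u ⬝ᵥ (A⁻¹ *ᵥ u)) ≠ 0) : IsUnit (A - c • vecMulVec u u) := by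
  rw [sub_smul_vecMulVec_self]
  exact isUnit_add_vecMulVec hA _ _ (by rwa [dotProduct_inv_mulVec_neg_smul, ← sub_eq_add_neg])

theorem dotProduct_inv_sub_smul_vecMulVec_self_mulVec (hA : IsUnit A) (c : R) (u : n → R)
    (h : 1 - c * (u ⬝ᵥ (A⁻¹ *ᵥ u)) ≠ 0) :
    u ⬝ᵥ ((A - c • vecMulVec u u)⁻¹ *ᵥ u) =
      u ⬝ᵥ (A⁻¹ *ᵥ u) / (1 - c * (u ⬝ᵥ (A⁻¹ *ᵥ u))) := by
  rw [sub_smul_vecMulVec_self, dotProduct_inv_add_vecMulVec_mulVec hA _ _ _ _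
    (by rwa [dotProduct_inv_mulVec_neg_smul, ← sub_eq_add_neg]),
    dotProduct_inv_mulVec_neg_smul, ← sub_eq_add_neg]
  rw [eq_div_iff h, sub_mul, div_mul_cancel₀ _ h]
  ring

end ShermanMorrison

end Matrix

theorem stmt_16_general
    (N D : ℕ)
    (x : Fin N → Fin D → ℝ) (y : Fin N → ℝ)
    (lam : ℝ) (hlam : 0 < lam)
    (f : ℝ → ℝ → ℝ)
    (hconv : ∀ c : ℝ, ConvexOn ℝ Set.univ (fun z => f z c))
    (hsmooth : ∀ c : ℝ, ContDiff ℝ 2 (fun z => f z c))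
    (θhat : Fin D → ℝ)
    (D1 : Fin N → ℝ)
    (D2 : Fin N → ℝ)
    (hD2 : ∀ n, D2 n = iteratedDeriv 2 (fun z => f z (y n)) (x n ⬝ᵥ θhat))
    (H : Matrix (Fin D) (Fin D) ℝ)
    (hH : H = (1 / N : ℝ) • ∑ m, D2 m • Matrix.vecMulVec (x m) (x m) + lam • 1)
    (Q : Fin N → ℝ)
    (hQ : ∀ n, Q n = x n ⬝ᵥ (H⁻¹ *ᵥ x n))
    (Hn : Fin N → Matrix (Fin D) (Fin D) ℝ)
    (hHn : ∀ n, Hn n = H - (D2 n / N) • Matrix.vecMulVec (x n) (x n))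
    (θNS : Fin N → Fin D → ℝ)
    (hθNS : ∀ n, θNS n = θhat + (D1 n / N) • ((Hn n)⁻¹ *ᵥ x n)) :
    ∀ n : Fin N, 1 - D2 n / N * Q n ≠ 0 →
      IsUnit (Hn n) ∧
      x n ⬝ᵥ ((Hn n)⁻¹ *ᵥ x n) = Q n / (1 - D2 n / N * Q n) ∧
      x n ⬝ᵥ θNS n = x n ⬝ᵥ θhat + D1 n / N * (Q n / (1 - D2 n / N * Q n)) := by
  intro n hne
  have hD2_nonneg : ∀ m, 0 ≤ D2 m := fun m => hD2 m ▸
    (hconv (y m)).iteratedDeriv_two_nonneg ((hsmooth (y m)).differentiable (by norm_num)) _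
  have hH_unit : IsUnit H := by
    have hgram := (posSemidef_sum_smul_vecMulVec_self D2 hD2_nonneg x).smul
      (by positivity : (0 : ℝ) ≤ 1 / N)
    rw [hH]
    exact (PosDef.posSemidef_add hgram (PosDef.one.smul hlam)).isUnit
  rw [hQ] at hne ⊢
  have hleverage := dotProduct_inv_sub_smul_vecMulVec_self_mulVec hH_unit _ _ hne
  refine ⟨hHn n ▸ isUnit_sub_smul_vecMulVec_self hH_unit _ _ hne, hHn n ▸ hleverage, ?_⟩
  rw [hθNS, dotProduct_add, dotProduct_smul, hHn, hleverage, smul_eq_mul]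

theorem stmt_16
    (N D : ℕ) (hN : 1 ≤ N) (hD : 1 ≤ D)
    (x : Fin N → Fin D → ℝ) (y : Fin N → ℝ)
    (lam : ℝ) (hlam : 0 < lam)
    (f : ℝ → ℝ → ℝ)
    (hconv : ∀ c : ℝ, ConvexOn ℝ Set.univ (fun z => f z c))
    (hsmooth : ∀ c : ℝ, ContDiff ℝ 2 (fun z => f z c))
    (F : (Fin D → ℝ) → ℝ)
    (hF : F = fun θ => (1 / N : ℝ) * ∑ n, f (x n ⬝ᵥ θ) (y n) + lam / 2 * (θ ⬝ᵥ θ))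
    (θhat : Fin D → ℝ)
    (hθhat : ∀ θ, F θhat ≤ F θ)
    (hθhatU : ∀ θ, (∀ θ', F θ ≤ F θ') → θ = θhat)
    (D1 : Fin N → ℝ)
    (hD1 : ∀ n, D1 n = deriv (fun z => f z (y n)) (x n ⬝ᵥ θhat))
    (D2 : Fin N → ℝ)
    (hD2 : ∀ n, D2 n = iteratedDeriv 2 (fun z => f z (y n)) (x n ⬝ᵥ θhat))
    (H : Matrix (Fin D) (Fin D) ℝ)
    (hH : H = (1 / N : ℝ) • ∑ m, D2 m • Matrix.vecMulVec (x m) (x m) + lam • 1)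
    (Q : Fin N → ℝ)
    (hQ : ∀ n, Q n = x n ⬝ᵥ (H⁻¹ *ᵥ x n))
    (Hn : Fin N → Matrix (Fin D) (Fin D) ℝ)
    (hHn : ∀ n, Hn n = H - (D2 n / N) • Matrix.vecMulVec (x n) (x n))
    (θNS : Fin N → Fin D → ℝ)
    (hθNS : ∀ n, θNS n = θhat + (D1 n / N) • ((Hn n)⁻¹ *ᵥ x n)) :
    ∀ n : Fin N, 1 - D2 n / N * Q n ≠ 0 →
      IsUnit (Hn n) ∧
      x n ⬝ᵥ ((Hn n)⁻¹ *ᵥ x n) = Q n / (1 - D2 n / N * Q n) ∧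
      x n ⬝ᵥ θNS n = x n ⬝ᵥ θhat + D1 n / N * (Q n / (1 - D2 n / N * Q n)) :=
  stmt_16_general N D x y lam hlam f hconv hsmooth θhat D1 D2 hD2 H hH Q hQ Hn hHn θNS hθNS
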